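/- arXiv:2208.08401 — 3 statements merged into one kernel-verified Lean document; each statement's English description precedes it below -/
import Mathlib

section
/- Fix integers k ≥ 1 and T ≥ 1, reals σ with 0 < σ ≤ 1/2, a sequence η_t > 0 for 1 ≤ t ≤ T, and nonnegative losses ℓ_t^i ≥ 0 for 1 ≤ t ≤ T, 1 ≤ i ≤ k. Define weights recursively by w₁^i = 1 and w_{t+1}^i = (1−σ)·w_t^i·exp(−η_t ℓ_t^i) + (σ/k)·Σ_{j=1}^k w_t^j·exp(−η_t ℓ_t^j), and set p_t^i := w_t^i / Σ_{j=1}^k w_t^j. Then for every interval [r,s] ⊆ [1,T] and every 1 ≤ i ≤ k: Σ_{t=r}^s η_t·Σ_{j=1}^k p_t^j ℓ_t^j ≤ Σ_{t=r}^s η_t ℓ_t^i + Σ_{t=r}^s η_t²·Σ_{j=1}^k p_t^j (ℓ_t^j)² + log(k/σ) + 2σ·(s−r+1). -/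
/-!
The total weight `W t = ∑ j, w t j` is squeezed between two estimates. From above, one step
multiplies it by `∑ j, p t j * exp (-η t * ℓ t j) ≤ 1 - η t ⟨p t, ℓ t⟩ + (η t) ^ 2 ⟨p t, (ℓ t) ^ 2⟩`
(by `exp (-x) ≤ 1 - x + x ^ 2` for `x ≥ 0`), so `log W` decreases by at least the learner's
loss minus the second-order term. From below, `W` dominates the weight of expert `i`, which
loses at most a factor `(1 - σ) * exp (-η t * ℓ t i) ≥ exp (-(2 * σ + η t * ℓ t i))` per step,
and which starts the interval with at least the share `σ / k` of the total thanks to the mixing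
term. Comparing the two telescoped bounds on `log W (s + 1) - log W r` gives the inequality.
-/

open Real Finset

lemma Real.exp_neg_le_one_sub_add_sq {x : ℝ} (hx : 0 ≤ x) : exp (-x) ≤ 1 - x + x ^ 2 := by
  rw [exp_neg, inv_le_iff_one_le_mul₀ (exp_pos x)]
  nlinarith [add_one_le_exp x, mul_nonneg (sq_nonneg x) hx]

lemma Real.exp_neg_two_mul_le_one_sub {σ : ℝ} (h0 : 0 ≤ σ) (h : σ ≤ 1 / 2) :
    exp (-(2 * σ)) ≤ 1 - σ := by
  rw [exp_neg, inv_le_iff_one_le_mul₀ (exp_pos _)]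
  nlinarith [add_one_le_exp (2 * σ)]

lemma Real.log_sum_mul_exp_neg_le {ι : Type*} [Fintype ι] {p ℓ : ι → ℝ} {η : ℝ}
    (hp : ∀ j, 0 ≤ p j) (hp1 : ∑ j, p j = 1) (hη : 0 ≤ η) (hℓ : ∀ j, 0 ≤ ℓ j) :
    log (∑ j, p j * exp (-η * ℓ j))
      ≤ -(η * ∑ j, p j * ℓ j) + η ^ 2 * ∑ j, p j * ℓ j ^ 2 := by
  obtain ⟨j₀, -, hj₀⟩ : ∃ j ∈ univ, (0 : ι → ℝ) j < p j :=
    exists_lt_of_sum_lt (by simp [hp1])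
  have hpos : 0 < ∑ j, p j * exp (-η * ℓ j) :=
    sum_pos' (fun j _ => mul_nonneg (hp j) (exp_pos _).le) ⟨j₀, mem_univ _, mul_pos hj₀ (exp_pos _)⟩
  have hquad : ∑ j, p j * exp (-η * ℓ j)
      ≤ 1 + (-(η * ∑ j, p j * ℓ j) + η ^ 2 * ∑ j, p j * ℓ j ^ 2) :=
    calc ∑ j, p j * exp (-η * ℓ j)
        ≤ ∑ j, p j * (1 - η * ℓ j + (η * ℓ j) ^ 2) := by
          gcongr with j
          · exact hp j
          · rw [neg_mul]; exact exp_neg_le_one_sub_add_sq (mul_nonneg hη (hℓ j))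
      _ = ∑ j, (p j - η * (p j * ℓ j) + η ^ 2 * (p j * ℓ j ^ 2)) := sum_congr rfl fun j _ => by ring
      _ = _ := by rw [sum_add_distrib, sum_sub_distrib, ← mul_sum, ← mul_sum, hp1]; ring
  linarith [log_le_sub_one_of_pos hpos]

noncomputable def fixedShareStep {ι : Type*} [Fintype ι] (σ η : ℝ) (ℓ v : ι → ℝ) (i : ι) : ℝ :=
  (1 - σ) * v i * exp (-η * ℓ i) + σ / Fintype.card ι * ∑ j, v j * exp (-η * ℓ j)

section FixedShareStep

variable {ι : Type*} [Fintype ι] {σ η : ℝ} {ℓ v : ι → ℝ}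

lemma sum_fixedShareStep [Nonempty ι] :
    ∑ i, fixedShareStep σ η ℓ v i = ∑ j, v j * exp (-η * ℓ j) := by
  have hcard : (Fintype.card ι : ℝ) ≠ 0 := Nat.cast_ne_zero.mpr Fintype.card_ne_zero
  simp only [fixedShareStep, sum_add_distrib, sum_const, card_univ, nsmul_eq_mul, mul_assoc,
    ← mul_sum]
  field_simp
  ring

lemma mul_exp_le_fixedShareStep (hσ0 : 0 ≤ σ) (hv : ∀ j, 0 ≤ v j) (i : ι) :
    (1 - σ) * v i * exp (-η * ℓ i) ≤ fixedShareStep σ η ℓ v i :=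
  le_add_of_nonneg_right <| mul_nonneg (div_nonneg hσ0 (Nat.cast_nonneg _)) <|
    sum_nonneg fun j _ => mul_nonneg (hv j) (exp_pos _).le

lemma fixedShareStep_pos (hσ0 : 0 ≤ σ) (hσ1 : σ < 1) (hv : ∀ j, 0 < v j) (i : ι) :
    0 < fixedShareStep σ η ℓ v i :=
  (mul_pos (mul_pos (sub_pos.mpr hσ1) (hv i)) (exp_pos _)).trans_le
    (mul_exp_le_fixedShareStep hσ0 (fun j => (hv j).le) i)

lemma div_card_mul_sum_le_fixedShareStep [Nonempty ι] (hσ1 : σ ≤ 1) (hv : ∀ j, 0 ≤ v j)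
    (i : ι) : σ / Fintype.card ι * ∑ j, fixedShareStep σ η ℓ v j ≤ fixedShareStep σ η ℓ v i := by
  have hσ1' : 0 ≤ 1 - σ := sub_nonneg.mpr hσ1
  have := hv i
  rw [sum_fixedShareStep, fixedShareStep, le_add_iff_nonneg_left]
  positivity

lemma log_sub_le_log_fixedShareStep (hσ0 : 0 ≤ σ) (hσ : σ ≤ 1 / 2) (hv : ∀ j, 0 < v j)
    (i : ι) : log (v i) - (2 * σ + η * ℓ i) ≤ log (fixedShareStep σ η ℓ v i) := by
  have hdecay : exp (-(2 * σ + η * ℓ i)) * v i ≤ fixedShareStep σ η ℓ v i :=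
    calc exp (-(2 * σ + η * ℓ i)) * v i = exp (-(2 * σ)) * v i * exp (-η * ℓ i) := by
          rw [← mul_right_comm, ← exp_add]; ring_nf
      _ ≤ (1 - σ) * v i * exp (-η * ℓ i) := by
          gcongr
          · exact (hv i).le
          · exact exp_neg_two_mul_le_one_sub hσ0 hσ
      _ ≤ fixedShareStep σ η ℓ v i := mul_exp_le_fixedShareStep hσ0 (fun j => (hv j).le) i
  calc log (v i) - (2 * σ + η * ℓ i) = log (exp (-(2 * σ + η * ℓ i)) * v i) := by
        rw [log_mul (exp_pos _).ne' (hv i).ne', log_exp]; ring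
    _ ≤ _ := log_le_log (by have := hv i; positivity) hdecay

lemma log_sum_fixedShareStep_sub_log_sum_le [Nonempty ι] (hη : 0 ≤ η) (hℓ : ∀ j, 0 ≤ ℓ j)
    (hv : ∀ j, 0 < v j) :
    log (∑ i, fixedShareStep σ η ℓ v i) - log (∑ j, v j)
      ≤ -(η * ∑ j, v j / (∑ l, v l) * ℓ j) + η ^ 2 * ∑ j, v j / (∑ l, v l) * ℓ j ^ 2 := by
  have hW : 0 < ∑ l, v l := sum_pos (fun j _ => hv j) univ_nonempty
  have hsplit : ∑ j, v j * exp (-η * ℓ j)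
      = (∑ l, v l) * ∑ j, v j / (∑ l, v l) * exp (-η * ℓ j) := by
    rw [mul_sum]
    exact sum_congr rfl fun j _ => by field_simp
  have hnorm : ∑ j, v j / (∑ l, v l) = 1 := by rw [← sum_div, div_self hW.ne']
  have hpos : 0 < ∑ j, v j / (∑ l, v l) * exp (-η * ℓ j) :=
    sum_pos (fun j _ => by have := hv j; positivity) univ_nonempty
  rw [sum_fixedShareStep, hsplit, log_mul hW.ne' hpos.ne', add_sub_cancel_left]
  exact log_sum_mul_exp_neg_le (fun j => (div_pos (hv j) hW).le) hnorm hη hℓ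

end FixedShareStep

lemma sub_le_sum_Icc_of_succ_sub_le {f g : ℕ → ℝ} {m n : ℕ} (hmn : m ≤ n)
    (h : ∀ t ∈ Icc m n, f (t + 1) - f t ≤ g t) : f (n + 1) - f m ≤ ∑ t ∈ Icc m n, g t :=
  (sum_Icc_sub hmn f).symm.trans_le (sum_le_sum h)

section FixedShare

variable {ι : Type*} [Fintype ι] {σ : ℝ} {η : ℕ → ℝ} {ℓ w : ℕ → ι → ℝ} {m n : ℕ}

lemma fixedShare_pos (hσ0 : 0 ≤ σ) (hσ1 : σ < 1)
    (hstep : ∀ t ∈ Icc m n, w (t + 1) = fixedShareStep σ (η t) (ℓ t) (w t))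
    (hm : ∀ j, 0 < w m j) : ∀ t ∈ Icc m (n + 1), ∀ j, 0 < w t j := by
  intro t ht
  obtain ⟨hmt, htn⟩ := mem_Icc.mp ht
  clear ht
  induction t, hmt using Nat.le_induction with
  | base => exact hm
  | succ t hmt ih =>
    rw [hstep t (mem_Icc.mpr ⟨hmt, by omega⟩)]
    exact fixedShareStep_pos hσ0 hσ1 (ih (by omega))

lemma div_card_mul_sum_le_fixedShare [Nonempty ι] (hσ0 : 0 ≤ σ) (hσ1 : σ < 1)
    (hstep : ∀ t ∈ Icc m n, w (t + 1) = fixedShareStep σ (η t) (ℓ t) (w t))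
    (hm : ∀ j, w m j = 1) (t : ℕ) (ht : t ∈ Icc m (n + 1)) (i : ι) :
    σ / Fintype.card ι * ∑ j, w t j ≤ w t i := by
  obtain ⟨hmt, htn⟩ := mem_Icc.mp ht
  rcases hmt.eq_or_lt with rfl | hlt
  · have hcard : (Fintype.card ι : ℝ) ≠ 0 := Nat.cast_ne_zero.mpr Fintype.card_ne_zero
    simp [hm, hcard, hσ1.le]
  · obtain ⟨u, rfl⟩ : ∃ u, t = u + 1 := ⟨t - 1, by omega⟩
    have hu : u ∈ Icc m n := mem_Icc.mpr ⟨by omega, by omega⟩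
    have hpos := fixedShare_pos hσ0 hσ1 hstep (fun j => (hm j).symm ▸ one_pos)
    rw [hstep u hu]
    exact div_card_mul_sum_le_fixedShareStep hσ1.le
      (fun j => (hpos u (Icc_subset_Icc_right n.le_succ hu) j).le) i

lemma log_sum_fixedShare_sub_log_sum_le [Nonempty ι] (hmn : m ≤ n) (hσ0 : 0 ≤ σ) (hσ1 : σ < 1)
    (hstep : ∀ t ∈ Icc m n, w (t + 1) = fixedShareStep σ (η t) (ℓ t) (w t))
    (hη : ∀ t ∈ Icc m n, 0 ≤ η t) (hℓ : ∀ t ∈ Icc m n, ∀ j, 0 ≤ ℓ t j)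
    (hm : ∀ j, 0 < w m j) :
    log (∑ j, w (n + 1) j) - log (∑ j, w m j) ≤ ∑ t ∈ Icc m n,
      (-(η t * ∑ j, w t j / (∑ l, w t l) * ℓ t j)
        + η t ^ 2 * ∑ j, w t j / (∑ l, w t l) * ℓ t j ^ 2) := by
  have hw := fixedShare_pos hσ0 hσ1 hstep hm
  refine sub_le_sum_Icc_of_succ_sub_le (f := fun t => log (∑ j, w t j)) hmn fun t ht => ?_
  simp only [hstep t ht]
  exact log_sum_fixedShareStep_sub_log_sum_le (hη t ht) (hℓ t ht)
    (hw t (Icc_subset_Icc_right n.le_succ ht))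

lemma le_log_sum_fixedShare [Nonempty ι] (hmn : m ≤ n) (hσ0 : 0 < σ) (hσ : σ ≤ 1 / 2)
    (hstep : ∀ t ∈ Icc m n, w (t + 1) = fixedShareStep σ (η t) (ℓ t) (w t))
    (hm : ∀ j, 0 < w m j) (i : ι) (hshare : σ / Fintype.card ι * ∑ j, w m j ≤ w m i) :
    log (σ / Fintype.card ι) + log (∑ j, w m j) - ∑ t ∈ Icc m n, (2 * σ + η t * ℓ t i)
      ≤ log (∑ j, w (n + 1) j) := by
  have hw := fixedShare_pos hσ0.le (by linarith) hstep hm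
  have hdecay := sub_le_sum_Icc_of_succ_sub_le (f := fun t => -log (w t i))
    (g := fun t => 2 * σ + η t * ℓ t i) hmn fun t ht => by
      have := log_sub_le_log_fixedShareStep (η := η t) (ℓ := ℓ t) hσ0.le hσ
        (hw t (Icc_subset_Icc_right n.le_succ ht)) i
      rw [hstep t ht]
      linarith
  have hW : 0 < ∑ j, w m j := sum_pos (fun j _ => hm j) univ_nonempty
  have hinit : log (σ / Fintype.card ι) + log (∑ j, w m j) ≤ log (w m i) := by
    rw [← log_mul (by positivity) hW.ne']
    exact log_le_log (by positivity) hshare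
  have hw_succ := hw (n + 1) (right_mem_Icc.mpr (by omega))
  have hdominate : log (w (n + 1) i) ≤ log (∑ j, w (n + 1) j) :=
    log_le_log (hw_succ i) (single_le_sum (fun j _ => (hw_succ j).le) (mem_univ i))
  linarith

end FixedShare

theorem fixed_share_regret_bound_time_varying_eta_general
    (k T : ℕ) (hk : 1 ≤ k)
    (σ : ℝ) (hσ0 : 0 < σ) (hσ : σ ≤ 1 / 2)
    (η : ℕ → ℝ) (hη : ∀ t, 1 ≤ t → t ≤ T → 0 < η t)
    (ℓ : ℕ → Fin k → ℝ) (hℓ : ∀ t, 1 ≤ t → t ≤ T → ∀ i, 0 ≤ ℓ t i)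
    (w : ℕ → Fin k → ℝ)
    (hw1 : ∀ i, w 1 i = 1)
    (hwrec : ∀ t, 1 ≤ t → t ≤ T → ∀ i,
      w (t + 1) i = (1 - σ) * w t i * Real.exp (-(η t) * ℓ t i)
        + σ / k * ∑ j, w t j * Real.exp (-(η t) * ℓ t j))
    (p : ℕ → Fin k → ℝ)
    (hp : ∀ t i, p t i = w t i / ∑ j, w t j)
    (r s : ℕ) (hr : 1 ≤ r) (hrs : r ≤ s) (hs : s ≤ T) (i : Fin k) :
    ∑ t ∈ Finset.Icc r s, η t * ∑ j, p t j * ℓ t j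
      ≤ ∑ t ∈ Finset.Icc r s, η t * ℓ t i
        + ∑ t ∈ Finset.Icc r s, (η t) ^ 2 * ∑ j, p t j * (ℓ t j) ^ 2
        + Real.log ((k : ℝ) / σ) + 2 * σ * ((s : ℝ) - (r : ℝ) + 1) := by
  have : Nonempty (Fin k) := Fin.pos_iff_nonempty.mp hk
  have hσ1 : σ < 1 := by linarith
  have hstep : ∀ t ∈ Icc 1 T, w (t + 1) = fixedShareStep σ (η t) (ℓ t) (w t) := fun t ht =>
    funext fun j => by simp [fixedShareStep, hwrec t (mem_Icc.mp ht).1 (mem_Icc.mp ht).2 j]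
  have hpos := fixedShare_pos hσ0.le hσ1 hstep (by simp [hw1])
  have hIcc : ∀ t ∈ Icc r s, 1 ≤ t ∧ t ≤ T := fun t ht => mem_Icc.mp (Icc_subset_Icc hr hs ht)
  have hstep_rs t (ht : t ∈ Icc r s) := hstep t (mem_Icc.mpr (hIcc t ht))
  have hw_r : ∀ j, 0 < w r j := hpos r (mem_Icc.mpr ⟨hr, by omega⟩)
  have hupper := log_sum_fixedShare_sub_log_sum_le hrs hσ0.le hσ1 hstep_rs
    (fun t ht => (hη t (hIcc t ht).1 (hIcc t ht).2).le)
    (fun t ht => hℓ t (hIcc t ht).1 (hIcc t ht).2) hw_r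
  have hlower := le_log_sum_fixedShare hrs hσ0 hσ hstep_rs hw_r i
    (div_card_mul_sum_le_fixedShare hσ0.le hσ1 hstep hw1 r (mem_Icc.mpr ⟨hr, by omega⟩) i)
  have hlogk : log (k / σ) = -log (σ / k) := by rw [← log_inv, inv_div]
  have hcount : ∑ t ∈ Icc r s, (2 * σ + η t * ℓ t i)
      = 2 * σ * ((s : ℝ) - r + 1) + ∑ t ∈ Icc r s, η t * ℓ t i := by
    rw [sum_add_distrib, sum_const, Nat.card_Icc, nsmul_eq_mul, Nat.cast_sub (by omega)]
    push_cast
    ring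
  simp only [← hp, sum_add_distrib, sum_neg_distrib] at hupper
  simp only [Fintype.card_fin] at hlower
  linarith

/-- Time-varying learning-rate version of the fixed-share regret bound (key inequality
in the proof of the variable-η dynamic regret theorem of the paper). -/
theorem fixed_share_regret_bound_time_varying_eta
    (k T : ℕ) (hk : 1 ≤ k) (hT : 1 ≤ T)
    (σ : ℝ) (hσ0 : 0 < σ) (hσ : σ ≤ 1 / 2)
    (η : ℕ → ℝ) (hη : ∀ t, 1 ≤ t → t ≤ T → 0 < η t)
    (ℓ : ℕ → Fin k → ℝ) (hℓ : ∀ t, 1 ≤ t → t ≤ T → ∀ i, 0 ≤ ℓ t i)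
    (w : ℕ → Fin k → ℝ)
    (hw1 : ∀ i, w 1 i = 1)
    (hwrec : ∀ t, 1 ≤ t → t ≤ T → ∀ i,
      w (t + 1) i = (1 - σ) * w t i * Real.exp (-(η t) * ℓ t i)
        + σ / k * ∑ j, w t j * Real.exp (-(η t) * ℓ t j))
    (p : ℕ → Fin k → ℝ)
    (hp : ∀ t i, p t i = w t i / ∑ j, w t j)
    (r s : ℕ) (hr : 1 ≤ r) (hrs : r ≤ s) (hs : s ≤ T) (i : Fin k) :
    ∑ t ∈ Finset.Icc r s, η t * ∑ j, p t j * ℓ t j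
      ≤ ∑ t ∈ Finset.Icc r s, η t * ℓ t i
        + ∑ t ∈ Finset.Icc r s, (η t) ^ 2 * ∑ j, p t j * (ℓ t j) ^ 2
        + Real.log ((k : ℝ) / σ) + 2 * σ * ((s : ℝ) - (r : ℝ) + 1) :=
  fixed_share_regret_bound_time_varying_eta_general k T hk σ hσ0 hσ η hη ℓ hℓ w hw1 hwrec p hp r s
    hr hrs hs i
end

section
/- Under the setup of the exponential-reweighting scheme with fixed η > 0 and 0 < σ ≤ 1/2 (weights w₁^i = 1, w_{t+1}^i = (1−σ)·w_t^i·exp(−η ℓ_t^i) + (σ/k)·Σ_j w_t^j·exp(−η ℓ_t^j), nonnegative losses ℓ_t^i ≥ 0), let W_t := Σ_{i=1}^k w_t^i. Then for every interval [r,s] ⊆ [1,T] and every 1 ≤ i ≤ k: W_{s+1}/W_r ≥ (1−σ)^{s−r+1} · (σ/k) · exp(−η·Σ_{t=r}^s ℓ_t^i) whenever r ≥ 2, and W_{s+1}/W_r ≥ (1−σ)^{s−r+1} · (1/k) · exp(−η·Σ_{t=r}^s ℓ_t^i) when r = 1. -/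
/-!
Each update keeps a `(1 - σ) · exp(-η ℓ_t^i)` fraction of expert `i`'s weight, so over
`[r, s]` the weight of `i` shrinks by at most `(1 - σ)^{s-r+1} exp(-η ∑ ℓ_t^i)`, and it bounds
`W_{s+1}` from below. The share step conserves total weight and gives every expert at least
`σ/k` of it, so `w_r^i ≥ (σ/k) W_r` for `r ≥ 2`, while `w_1^i = W_1 / k`.
-/

open Finset

/-- The paper's update is `w_{t+1} = fixedShare σ (w_t · exp(-η ℓ_t))`. -/
noncomputable def fixedShare {k : ℕ} (σ : ℝ) (v : Fin k → ℝ) : Fin k → ℝ :=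
  fun i => (1 - σ) * v i + σ / k * ∑ j, v j

section FixedShare

variable {k : ℕ} {σ : ℝ} {v : Fin k → ℝ}

theorem sum_fixedShare (σ : ℝ) (v : Fin k → ℝ) : ∑ i, fixedShare σ v i = ∑ i, v i := by
  rcases Nat.eq_zero_or_pos k with rfl | hk
  · simp
  · have hk' : (k : ℝ) ≠ 0 := by positivity
    simp only [fixedShare, sum_add_distrib, ← mul_sum, sum_const, card_univ, Fintype.card_fin,
      nsmul_eq_mul]
    field_simp
    ring

theorem mul_le_fixedShare (hσ : 0 ≤ σ) (hv : ∀ j, 0 ≤ v j) (i : Fin k) :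
    (1 - σ) * v i ≤ fixedShare σ v i := by
  have : 0 ≤ σ / k * ∑ j, v j := by
    have : 0 ≤ ∑ j, v j := sum_nonneg fun j _ => hv j
    positivity
  simp only [fixedShare]
  linarith

theorem div_mul_sum_fixedShare_le (hσ : σ ≤ 1) (hv : ∀ j, 0 ≤ v j) (i : Fin k) :
    σ / k * ∑ j, fixedShare σ v j ≤ fixedShare σ v i := by
  have : 0 ≤ (1 - σ) * v i := mul_nonneg (by linarith) (hv i)
  rw [sum_fixedShare, fixedShare]
  linarith

theorem fixedShare_pos_s5 (hσ0 : 0 ≤ σ) (hσ1 : σ < 1) (hv : ∀ j, 0 < v j) (i : Fin k) :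
    0 < fixedShare σ v i :=
  (mul_pos (by linarith) (hv i)).trans_le (mul_le_fixedShare hσ0 (fun j => (hv j).le) i)

end FixedShare

section WeightSequence

variable {k : ℕ} {σ : ℝ} {w a : ℕ → Fin k → ℝ} {m n : ℕ}

theorem weight_pos_of_fixedShare (hσ0 : 0 ≤ σ) (hσ1 : σ < 1) (ha : ∀ t j, 0 < a t j)
    (hstep : ∀ t, m ≤ t → t < n → w (t + 1) = fixedShare σ (w t * a t))
    (hm : ∀ j, 0 < w m j) : ∀ t, m ≤ t → t ≤ n → ∀ j, 0 < w t j := by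
  intro t hmt
  induction t, hmt using Nat.le_induction with
  | base => exact fun _ => hm
  | succ t hmt ih =>
    intro htn j
    rw [hstep t hmt (by omega)]
    exact fixedShare_pos_s5 hσ0 hσ1 (fun j => mul_pos (ih (by omega) j) (ha t j)) j

theorem pow_mul_prod_mul_le_weight (hσ0 : 0 ≤ σ) (hσ1 : σ ≤ 1) (ha : ∀ t j, 0 ≤ a t j)
    (hstep : ∀ t, m ≤ t → t < n → w (t + 1) = fixedShare σ (w t * a t))
    (hw : ∀ t, m ≤ t → t ≤ n → ∀ j, 0 ≤ w t j) {r : ℕ} (hmr : m ≤ r) (i : Fin k) :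
    ∀ s, r ≤ s → s ≤ n → (1 - σ) ^ (s - r) * (∏ t ∈ Ico r s, a t i) * w r i ≤ w s i := by
  intro s hrs
  induction s, hrs using Nat.le_induction with
  | base => simp
  | succ s hrs ih =>
    intro hsn
    have hwa : ∀ j, 0 ≤ (w s * a s) j := fun j =>
      mul_nonneg (hw s (by omega) (by omega) j) (ha s j)
    calc (1 - σ) ^ (s + 1 - r) * (∏ t ∈ Ico r (s + 1), a t i) * w r i
        = (1 - σ) * ((1 - σ) ^ (s - r) * (∏ t ∈ Ico r s, a t i) * w r i) * a s i := by
          rw [prod_Ico_succ_top hrs, Nat.sub_add_comm hrs, pow_succ]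
          ring
      _ ≤ (1 - σ) * w s i * a s i := by
          have h1σ : 0 ≤ 1 - σ := by linarith
          gcongr
          · exact ha s i
          · exact ih (by omega)
      _ ≤ w (s + 1) i := by
          rw [hstep s (by omega) (by omega), mul_assoc]
          exact mul_le_fixedShare hσ0 hwa i

theorem pow_mul_prod_mul_le_sum_weight (hσ0 : 0 ≤ σ) (hσ1 : σ ≤ 1) (ha : ∀ t j, 0 ≤ a t j)
    (hstep : ∀ t, m ≤ t → t < n → w (t + 1) = fixedShare σ (w t * a t))
    (hw : ∀ t, m ≤ t → t ≤ n → ∀ j, 0 ≤ w t j) {r s : ℕ} (hmr : m ≤ r) (hrs : r ≤ s)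
    (hsn : s ≤ n) (i : Fin k) :
    (1 - σ) ^ (s - r) * (∏ t ∈ Ico r s, a t i) * w r i ≤ ∑ j, w s j :=
  (pow_mul_prod_mul_le_weight hσ0 hσ1 ha hstep hw hmr i s hrs hsn).trans
    (single_le_sum (fun j _ => hw s (by omega) hsn j) (mem_univ i))

theorem div_mul_sum_weight_le (hσ1 : σ ≤ 1) (ha : ∀ t j, 0 ≤ a t j)
    (hstep : ∀ t, m ≤ t → t < n → w (t + 1) = fixedShare σ (w t * a t))
    (hw : ∀ t, m ≤ t → t ≤ n → ∀ j, 0 ≤ w t j) {t : ℕ} (hmt : m ≤ t) (htn : t < n) (i : Fin k) :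
    σ / k * ∑ j, w (t + 1) j ≤ w (t + 1) i := by
  rw [hstep t hmt htn]
  exact div_mul_sum_fixedShare_le hσ1 (fun j => mul_nonneg (hw t hmt htn.le j) (ha t j)) i

end WeightSequence

theorem fixed_share_total_weight_lower_bound_general
    (k T : ℕ)
    (η σ : ℝ) (hσ0 : 0 < σ) (hσ : σ ≤ 1 / 2)
    (ℓ : ℕ → Fin k → ℝ)
    (w : ℕ → Fin k → ℝ)
    (hw1 : ∀ i, w 1 i = 1)
    (hwrec : ∀ t, 1 ≤ t → t ≤ T → ∀ i,
      w (t + 1) i = (1 - σ) * w t i * Real.exp (-η * ℓ t i)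
        + σ / k * ∑ j, w t j * Real.exp (-η * ℓ t j))
    (W : ℕ → ℝ) (hW : ∀ t, W t = ∑ i, w t i)
    (r s : ℕ) (hr : 1 ≤ r) (hrs : r ≤ s) (hs : s ≤ T) (i : Fin k) :
    (2 ≤ r →
      (1 - σ) ^ (s - r + 1) * (σ / k) * Real.exp (-η * ∑ t ∈ Finset.Icc r s, ℓ t i)
        ≤ W (s + 1) / W r) ∧
    (r = 1 →
      (1 - σ) ^ (s - r + 1) * (1 / k) * Real.exp (-η * ∑ t ∈ Finset.Icc r s, ℓ t i)
        ≤ W (s + 1) / W r) := by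
  set a : ℕ → Fin k → ℝ := fun t j => Real.exp (-η * ℓ t j)
  have ha : ∀ t j, 0 < a t j := fun t j => Real.exp_pos _
  have hstep : ∀ t, 1 ≤ t → t < T + 1 → w (t + 1) = fixedShare σ (w t * a t) := by
    intro t h1 h2
    funext j
    rw [hwrec t h1 (by omega) j]
    simp only [fixedShare, Pi.mul_apply, a]
    ring
  have hpos := weight_pos_of_fixedShare hσ0.le (by linarith) ha hstep (fun j => by simp [hw1])
  have hnonneg := fun t h1 h2 j => (hpos t h1 h2 j).le
  have hdecay : (1 - σ) ^ (s - r + 1) * Real.exp (-η * ∑ t ∈ Icc r s, ℓ t i) * w r i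
      ≤ W (s + 1) := by
    have h := pow_mul_prod_mul_le_sum_weight hσ0.le (by linarith) (fun t j => (ha t j).le) hstep
      hnonneg hr (s := s + 1) (by omega) (by omega) i
    rwa [Nat.sub_add_comm hrs, Ico_add_one_right_eq_Icc, ← Real.exp_sum, ← mul_sum, ← hW] at h
  have hratio : ∀ c, c * W r ≤ w r i →
      (1 - σ) ^ (s - r + 1) * c * Real.exp (-η * ∑ t ∈ Icc r s, ℓ t i) ≤ W (s + 1) / W r := by
    intro c hc
    have hWr : 0 < W r := hW r ▸ sum_pos (fun j _ => hpos r hr (by omega) j) ⟨i, mem_univ i⟩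
    have h1σ : 0 ≤ 1 - σ := by linarith
    rw [le_div_iff₀ hWr, mul_right_comm _ c, mul_assoc _ c]
    exact (mul_le_mul_of_nonneg_left hc (by positivity)).trans hdecay
  refine ⟨fun hr2 => hratio _ ?_, fun hr1 => hratio _ ?_⟩
  · obtain ⟨t, rfl⟩ : ∃ t, r = t + 1 := ⟨r - 1, by omega⟩
    rw [hW]
    exact div_mul_sum_weight_le (by linarith) (fun t j => (ha t j).le) hstep hnonneg
      (by omega) (by omega) i
  · have hk : (k : ℝ) ≠ 0 := by have := i.pos; positivity
    subst hr1
    simp [hW, hw1, hk]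

/-- Lower bound on the total weight in the fixed-share exponential reweighting scheme
(established in the proof of Lemma 1 of the paper):
`W (s+1) / W r ≥ (1−σ)^{s−r+1} · (σ/k) · exp(−η ∑_{t=r}^s ℓ t i)` when `r ≥ 2`, and
with `σ/k` replaced by `1/k` when `r = 1`. -/
theorem fixed_share_total_weight_lower_bound
    (k T : ℕ) (hk : 1 ≤ k) (hT : 1 ≤ T)
    (η σ : ℝ) (hη : 0 < η) (hσ0 : 0 < σ) (hσ : σ ≤ 1 / 2)
    (ℓ : ℕ → Fin k → ℝ) (hℓ : ∀ t, 1 ≤ t → t ≤ T → ∀ i, 0 ≤ ℓ t i)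
    (w : ℕ → Fin k → ℝ)
    (hw1 : ∀ i, w 1 i = 1)
    (hwrec : ∀ t, 1 ≤ t → t ≤ T → ∀ i,
      w (t + 1) i = (1 - σ) * w t i * Real.exp (-η * ℓ t i)
        + σ / k * ∑ j, w t j * Real.exp (-η * ℓ t j))
    (W : ℕ → ℝ) (hW : ∀ t, W t = ∑ i, w t i)
    (r s : ℕ) (hr : 1 ≤ r) (hrs : r ≤ s) (hs : s ≤ T) (i : Fin k) :
    (2 ≤ r →
      (1 - σ) ^ (s - r + 1) * (σ / k) * Real.exp (-η * ∑ t ∈ Finset.Icc r s, ℓ t i)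
        ≤ W (s + 1) / W r) ∧
    (r = 1 →
      (1 - σ) ^ (s - r + 1) * (1 / k) * Real.exp (-η * ∑ t ∈ Finset.Icc r s, ℓ t i)
        ≤ W (s + 1) / W r) :=
  fixed_share_total_weight_lower_bound_general k T η σ hσ0 hσ ℓ w hw1 hwrec W hW r s hr hrs hs i
end

section
/- Fix α ∈ [0,1], integers k ≥ 1, T ≥ 1, step sizes γ₁,…,γ_k > 0 with γ_min := min_i γ_i and γ_max := max_i γ_i, a sequence β₁,…,β_T ∈ [0,1], and sequences η_t > 0 and σ_t ∈ [0,1]. For each expert i, define α₁^i ∈ [0,1], err_t^i := 1{β_t < α_t^i}, and α_{t+1}^i := α_t^i + γ_i·(α − err_t^i); set ℓ_t^i := ℓ(β_t, α_t^i) and define weights w₁^i = 1, w_{t+1}^i = (1−σ_t)·w_t^i·exp(−η_t ℓ_t^i) + (σ_t/k)·Σ_j w_t^j·exp(−η_t ℓ_t^j), and probabilities p_t^i := w_t^i/Σ_j w_t^j. Then | (1/T)·Σ_{t=1}^T Σ_i p_t^i err_t^i − α | ≤ (1+2γ_max)/(T·γ_min) + ((1+2γ_max)²/γ_min)·(1/T)·Σ_{t=1}^T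 η_t·exp(η_t·(1+2γ_max)) + 2·((1+γ_max)/γ_min)·(1/T)·Σ_{t=1}^T σ_t. -/
/-!
Each expert's threshold `a_t^i` stays in `[-γ_i, 1 + γ_i]`, and `a_{t+1}^i - a_1^i` is
`-γ_i` times the partial sum `∑_{s ≤ t} (err_s^i - α)`, so these partial sums are bounded by
`(1 + γ_i) / γ_i`. Summation by parts transfers the bound to the `p_t`-weighted sums, at the cost
of the total variation `∑_i |p_{t+1}^i - p_t^i|` of the weights. The exponential reweighting moves
each weight by a likelihood ratio in `[e^{-η_t L}, e^{η_t L}]`, where `L = 1 + 2γ_max` bounds the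
losses, which costs at most `η_t L e^{η_t L}`; the uniform mixing costs at most `2σ_t`.
-/

/-- The pinball (quantile) loss at level `α`: `ℓ(β, θ) = α(β − θ) − min{0, β − θ}`. -/
noncomputable def pinball (α β θ : ℝ) : ℝ := α * (β - θ) - min 0 (β - θ)

open Finset Real

lemma pinball_nonneg {α : ℝ} (hα : α ∈ Set.Icc (0 : ℝ) 1) (β θ : ℝ) : 0 ≤ pinball α β θ := by
  obtain ⟨hα0, hα1⟩ := hα
  unfold pinball
  rcases le_total (β - θ) 0 with h | h
  · rw [min_eq_right h]; nlinarith
  · rw [min_eq_left h]; nlinarith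

lemma pinball_le_abs_sub {α : ℝ} (hα : α ∈ Set.Icc (0 : ℝ) 1) (β θ : ℝ) :
    pinball α β θ ≤ |β - θ| := by
  obtain ⟨hα0, hα1⟩ := hα
  unfold pinball
  rcases le_total (β - θ) 0 with h | h
  · rw [min_eq_right h, abs_of_nonpos h]; nlinarith
  · rw [min_eq_left h, abs_of_nonneg h]; nlinarith

lemma abs_sub_one_le_mul_exp {r x : ℝ} (hlo : exp (-x) ≤ r) (hhi : r ≤ exp x) :
    |r - 1| ≤ x * exp x := by
  have hx : 0 ≤ x := by linarith [exp_le_exp.mp (hlo.trans hhi)]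
  -- `exp x - 1 ≤ x exp x` is `1 - x ≤ exp (-x)` multiplied by `exp x`
  have hpos : exp x - 1 ≤ x * exp x := by
    have := mul_le_mul_of_nonneg_right (add_one_le_exp (-x)) (exp_pos x).le
    rw [← exp_add, neg_add_cancel, exp_zero] at this
    linarith
  have hneg := add_one_le_exp (-x)
  have : 1 ≤ exp x := one_le_exp hx
  rw [abs_sub_le_iff]
  constructor <;> nlinarith

section Weights

variable {ι : Type*} [Fintype ι] [Nonempty ι]

lemma sum_abs_expWeights_sub_le {w ℓ : ι → ℝ} {η L : ℝ} (hw : ∀ i, 0 < w i)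
    (hη : 0 ≤ η) (hℓ : ∀ i, ℓ i ∈ Set.Icc 0 L) :
    ∑ i, |w i * exp (-η * ℓ i) / ∑ j, w j * exp (-η * ℓ j) - w i / ∑ j, w j|
      ≤ η * L * exp (η * L) := by
  set E : ι → ℝ := fun i => exp (-η * ℓ i)
  set W := ∑ j, w j
  set Z := ∑ j, w j * E j
  have hW : 0 < W := sum_pos (fun j _ => hw j) univ_nonempty
  have hE_le : ∀ i, E i ≤ 1 := fun i => exp_le_one_iff.mpr (by nlinarith [(hℓ i).1])
  have hE_ge : ∀ i, exp (-(η * L)) ≤ E i := fun i =>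
    exp_le_exp.mpr (by nlinarith [(hℓ i).2])
  have hZ : 0 < Z := sum_pos (fun j _ => mul_pos (hw j) (exp_pos _)) univ_nonempty
  have hZW : Z ≤ W := sum_le_sum fun j _ => mul_le_of_le_one_right (hw j).le (hE_le j)
  have hWZ : exp (-(η * L)) * W ≤ Z := by
    rw [mul_sum]; exact sum_le_sum fun j _ => by nlinarith [hE_ge j, hw j]
  have hratio : ∀ i, |E i * W / Z - 1| ≤ η * L * exp (η * L) := by
    intro i
    apply abs_sub_one_le_mul_exp
    · rw [le_div_iff₀ hZ]; nlinarith [hE_ge i, exp_pos (-(η * L))]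
    · rw [div_le_iff₀ hZ]
      have : W ≤ exp (η * L) * Z := by
        rwa [exp_neg, inv_mul_le_iff₀ (exp_pos _)] at hWZ
      nlinarith [hE_le i, exp_pos (η * L)]
  calc ∑ i, |w i * E i / Z - w i / W| = ∑ i, w i / W * |E i * W / Z - 1| := by
        refine sum_congr rfl fun i _ => ?_
        rw [← abs_of_pos (div_pos (hw i) hW), ← abs_mul, abs_of_pos (div_pos (hw i) hW)]
        congr 1
        field_simp
    _ ≤ ∑ i, w i / W * (η * L * exp (η * L)) :=
        sum_le_sum fun i _ => mul_le_mul_of_nonneg_left (hratio i) (div_pos (hw i) hW).le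
    _ = η * L * exp (η * L) := by rw [← sum_mul, ← sum_div, div_self hW.ne', one_mul]

lemma sum_abs_mix_sub_le {p q : ι → ℝ} (hp : ∀ i, 0 ≤ p i) (hp1 : ∑ i, p i = 1) {σ : ℝ}
    (hσ : σ ∈ Set.Icc (0 : ℝ) 1) :
    ∑ i, |(1 - σ) * q i + σ / Fintype.card ι - p i| ≤ ∑ i, |q i - p i| + 2 * σ := by
  obtain ⟨hσ0, hσ1⟩ := hσ
  have hk : (0 : ℝ) < Fintype.card ι := by exact_mod_cast Fintype.card_pos
  have hterm : ∀ i, |(1 - σ) * q i + σ / Fintype.card ι - p i|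
      ≤ |q i - p i| + σ * (1 / Fintype.card ι + p i) := by
    intro i
    have hsplit : (1 - σ) * q i + σ / Fintype.card ι - p i
        = (1 - σ) * (q i - p i) + σ * (1 / Fintype.card ι - p i) := by ring
    have h1 : |1 / (Fintype.card ι : ℝ) - p i| ≤ 1 / Fintype.card ι + p i := by
      rw [abs_le]; constructor <;> linarith [hp i, one_div_pos.mpr hk]
    rw [hsplit]
    refine (abs_add_le _ _).trans ?_
    rw [abs_mul, abs_mul, abs_of_nonneg (by linarith : 0 ≤ 1 - σ), abs_of_nonneg hσ0]
    nlinarith [abs_nonneg (q i - p i)]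
  calc _ ≤ ∑ i, (|q i - p i| + σ * (1 / Fintype.card ι + p i)) := sum_le_sum fun i _ => hterm i
    _ = ∑ i, |q i - p i| + 2 * σ := by
      rw [sum_add_distrib, ← mul_sum, sum_add_distrib, hp1, sum_const, card_univ, nsmul_eq_mul]
      field_simp
      ring

noncomputable def faciStep (η σ : ℝ) (ℓ w : ι → ℝ) (i : ι) : ℝ :=
  (1 - σ) * w i * exp (-η * ℓ i) + σ / Fintype.card ι * ∑ j, w j * exp (-η * ℓ j)

variable {w ℓ : ι → ℝ} {η σ : ℝ}

lemma sum_faciStep : ∑ i, faciStep η σ ℓ w i = ∑ j, w j * exp (-η * ℓ j) := by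
  have hk : (Fintype.card ι : ℝ) ≠ 0 := by exact_mod_cast Fintype.card_ne_zero
  simp only [faciStep, sum_add_distrib, ← mul_sum, sum_const, card_univ, nsmul_eq_mul,
    mul_assoc]
  field_simp
  ring

lemma faciStep_pos (hw : ∀ i, 0 < w i) (hσ : σ ∈ Set.Icc (0 : ℝ) 1) (i : ι) :
    0 < faciStep η σ ℓ w i := by
  obtain ⟨hσ0, hσ1⟩ := hσ
  have hZ : 0 < ∑ j, w j * exp (-η * ℓ j) :=
    sum_pos (fun j _ => mul_pos (hw j) (exp_pos _)) univ_nonempty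
  rcases hσ0.eq_or_lt with rfl | hσ0
  · simpa [faciStep] using mul_pos (hw i) (exp_pos (-η * ℓ i))
  · have : 0 ≤ (1 - σ) * w i * exp (-η * ℓ i) :=
      mul_nonneg (mul_nonneg (by linarith) (hw i).le) (exp_pos _).le
    have : 0 < σ / Fintype.card ι * ∑ j, w j * exp (-η * ℓ j) := by positivity
    unfold faciStep
    linarith

lemma faciStep_div_sum (hw : ∀ i, 0 < w i) (i : ι) :
    faciStep η σ ℓ w i / ∑ j, faciStep η σ ℓ w j
      = (1 - σ) * (w i * exp (-η * ℓ i) / ∑ j, w j * exp (-η * ℓ j)) + σ / Fintype.card ι := by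
  have hZ : 0 < ∑ j, w j * exp (-η * ℓ j) :=
    sum_pos (fun j _ => mul_pos (hw j) (exp_pos _)) univ_nonempty
  rw [sum_faciStep, faciStep, add_div, mul_assoc, mul_div_assoc, mul_div_cancel_right₀ _ hZ.ne']

lemma sum_abs_faciStep_div_sum_sub_le {L : ℝ} (hw : ∀ i, 0 < w i) (hη : 0 ≤ η)
    (hℓ : ∀ i, ℓ i ∈ Set.Icc 0 L) (hσ : σ ∈ Set.Icc (0 : ℝ) 1) :
    ∑ i, |faciStep η σ ℓ w i / ∑ j, faciStep η σ ℓ w j - w i / ∑ j, w j|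
      ≤ η * L * exp (η * L) + 2 * σ := by
  have hW : 0 < ∑ j, w j := sum_pos (fun j _ => hw j) univ_nonempty
  simp only [faciStep_div_sum hw]
  refine (sum_abs_mix_sub_le (fun i => (div_pos (hw i) hW).le) ?_ hσ).trans ?_
  · rw [← sum_div, div_self hW.ne']
  · linarith [sum_abs_expWeights_sub_le hw hη hℓ]

end Weights

section ACI

variable {α γ : ℝ}

lemma aci_step_mem_Icc (hα : α ∈ Set.Icc (0 : ℝ) 1) (hγ : 0 ≤ γ) {β a : ℝ}
    (hβ : β ∈ Set.Icc (0 : ℝ) 1) (ha : a ∈ Set.Icc (-γ) (1 + γ)) :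
    a + γ * (α - if β < a then 1 else 0) ∈ Set.Icc (-γ) (1 + γ) := by
  obtain ⟨hα0, hα1⟩ := hα
  obtain ⟨hβ0, hβ1⟩ := hβ
  obtain ⟨ha0, ha1⟩ := ha
  split_ifs <;> constructor <;> nlinarith

lemma aci_mem_Icc (hα : α ∈ Set.Icc (0 : ℝ) 1) (hγ : 0 ≤ γ) {T : ℕ} {β a err : ℕ → ℝ}
    (hβ : ∀ t, 1 ≤ t → t ≤ T → β t ∈ Set.Icc (0 : ℝ) 1) (ha1 : a 1 ∈ Set.Icc (0 : ℝ) 1)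
    (herr : ∀ t, err t = if β t < a t then 1 else 0)
    (hrec : ∀ t, 1 ≤ t → a (t + 1) = a t + γ * (α - err t)) :
    ∀ t, 1 ≤ t → t ≤ T + 1 → a t ∈ Set.Icc (-γ) (1 + γ) := by
  intro t ht
  induction t, ht using Nat.le_induction with
  | base => exact fun _ => ⟨by linarith [ha1.1], by linarith [ha1.2]⟩
  | succ t ht ih =>
    intro htT
    rw [hrec t ht, herr]
    exact aci_step_mem_Icc hα hγ (hβ t ht (by omega)) (ih (by omega))

lemma aci_eq_sub_mul_sum {a err : ℕ → ℝ} (hrec : ∀ t, 1 ≤ t → a (t + 1) = a t + γ * (α - err t))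
    (t : ℕ) : a (t + 1) = a 1 - γ * ∑ s ∈ Icc 1 t, (err s - α) := by
  induction t with
  | zero => simp
  | succ n ih =>
    rw [hrec (n + 1) (by omega), ih, sum_Icc_succ_top (by omega)]
    ring

lemma aci_abs_sum_err_sub_le (hα : α ∈ Set.Icc (0 : ℝ) 1) (hγ : 0 < γ) {T : ℕ}
    {β a err : ℕ → ℝ} (hβ : ∀ t, 1 ≤ t → t ≤ T → β t ∈ Set.Icc (0 : ℝ) 1)
    (ha1 : a 1 ∈ Set.Icc (0 : ℝ) 1) (herr : ∀ t, err t = if β t < a t then 1 else 0)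
    (hrec : ∀ t, 1 ≤ t → a (t + 1) = a t + γ * (α - err t)) {t : ℕ} (ht : t ≤ T) :
    |∑ s ∈ Icc 1 t, (err s - α)| ≤ (1 + γ) / γ := by
  have hbound := aci_mem_Icc hα hγ.le hβ ha1 herr hrec (t + 1) (by omega) (by omega)
  rw [aci_eq_sub_mul_sum hrec] at hbound
  obtain ⟨h0, h1⟩ := ha1
  obtain ⟨hl, hu⟩ := hbound
  calc |∑ s ∈ Icc 1 t, (err s - α)| = |γ * ∑ s ∈ Icc 1 t, (err s - α)| / γ := by
        rw [abs_mul, abs_of_pos hγ, mul_div_cancel_left₀ _ hγ.ne']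
    _ ≤ (1 + γ) / γ := by
        gcongr
        rw [abs_le]
        constructor <;> linarith

lemma aci_pinball_mem_Icc (hα : α ∈ Set.Icc (0 : ℝ) 1) (hγ : 0 ≤ γ) {T : ℕ} {β a err : ℕ → ℝ}
    (hβ : ∀ t, 1 ≤ t → t ≤ T → β t ∈ Set.Icc (0 : ℝ) 1) (ha1 : a 1 ∈ Set.Icc (0 : ℝ) 1)
    (herr : ∀ t, err t = if β t < a t then 1 else 0)
    (hrec : ∀ t, 1 ≤ t → a (t + 1) = a t + γ * (α - err t)) {t : ℕ} (ht : t ∈ Icc 1 T) :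
    pinball α (β t) (a t) ∈ Set.Icc 0 (1 + γ) := by
  obtain ⟨ht1, htT⟩ := mem_Icc.mp ht
  obtain ⟨hβ0, hβ1⟩ := hβ t ht1 htT
  obtain ⟨hl, hu⟩ := aci_mem_Icc hα hγ hβ ha1 herr hrec t ht1 (by omega)
  refine ⟨pinball_nonneg hα _ _, (pinball_le_abs_sub hα _ _).trans ?_⟩
  rw [abs_le]
  constructor <;> linarith

end ACI

lemma Finset.sum_Icc_mul_eq_by_parts {R : Type*} [CommRing R] (q d : ℕ → R) (T : ℕ) :
    ∑ t ∈ Icc 1 T, q t * d t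
      = q T * ∑ s ∈ Icc 1 T, d s
        - ∑ t ∈ Icc 1 (T - 1), (q (t + 1) - q t) * ∑ s ∈ Icc 1 t, d s := by
  rcases T with _ | n
  · simp
  rw [Nat.add_sub_cancel]
  induction n with
  | zero => simp
  | succ n ih =>
    rw [sum_Icc_succ_top (by omega : 1 ≤ n + 1 + 1) (fun t => q t * d t), ih,
      sum_Icc_succ_top (by omega : 1 ≤ n + 1 + 1) d,
      sum_Icc_succ_top (by omega : 1 ≤ n + 1) fun t => (q (t + 1) - q t) * ∑ s ∈ Icc 1 t, d s]
    ring

lemma abs_sum_sum_mul_le_of_abs_partial_sum_le {ι : Type*} [Fintype ι] {p d : ℕ → ι → ℝ}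
    {D : ℕ → ℝ} {B : ℝ} {T : ℕ} (hp : ∀ i, 0 ≤ p T i) (hp1 : ∑ i, p T i = 1)
    (hS : ∀ t ≤ T, ∀ i, |∑ s ∈ Icc 1 t, d s i| ≤ B)
    (hD : ∀ t ∈ Icc 1 T, ∑ i, |p (t + 1) i - p t i| ≤ D t) :
    |∑ t ∈ Icc 1 T, ∑ i, p t i * d t i| ≤ B * (1 + ∑ t ∈ Icc 1 T, D t) := by
  obtain ⟨i₀, -, -⟩ := exists_ne_zero_of_sum_ne_zero (hp1 ▸ one_ne_zero)
  have hB : 0 ≤ B := (abs_nonneg _).trans (hS 0 (Nat.zero_le _) i₀)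
  have hlast : |∑ i, p T i * ∑ s ∈ Icc 1 T, d s i| ≤ B :=
    calc _ ≤ ∑ i, p T i * B := (abs_sum_le_sum_abs _ _).trans <| sum_le_sum fun i _ => by
          rw [abs_mul, abs_of_nonneg (hp i)]
          exact mul_le_mul_of_nonneg_left (hS T le_rfl i) (hp i)
      _ = B := by rw [← sum_mul, hp1, one_mul]
  have hstep : ∀ t ∈ Icc 1 T,
      |∑ i, (p (t + 1) i - p t i) * ∑ s ∈ Icc 1 t, d s i| ≤ B * D t := fun t ht =>
    calc _ ≤ ∑ i, |p (t + 1) i - p t i| * B := (abs_sum_le_sum_abs _ _).trans <|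
          sum_le_sum fun i _ => by
            rw [abs_mul]
            exact mul_le_mul_of_nonneg_left (hS t (mem_Icc.mp ht).2 i) (abs_nonneg _)
      _ ≤ B * D t := by rw [← sum_mul, mul_comm]; exact mul_le_mul_of_nonneg_left (hD t ht) hB
  have hsteps : |∑ t ∈ Icc 1 (T - 1), ∑ i, (p (t + 1) i - p t i) * ∑ s ∈ Icc 1 t, d s i|
      ≤ B * ∑ t ∈ Icc 1 T, D t :=
    calc _ ≤ ∑ t ∈ Icc 1 (T - 1), B * D t := (abs_sum_le_sum_abs _ _).trans <|
          sum_le_sum fun t ht => hstep t (Icc_subset_Icc_right (by omega) ht)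
      _ ≤ ∑ t ∈ Icc 1 T, B * D t := sum_le_sum_of_subset_of_nonneg
          (Icc_subset_Icc_right (by omega)) fun t ht _ => (abs_nonneg _).trans (hstep t ht)
      _ = B * ∑ t ∈ Icc 1 T, D t := (mul_sum _ _ _).symm
  rw [sum_comm]
  simp only [fun i => sum_Icc_mul_eq_by_parts (fun t => p t i) (fun t => d t i) T]
  rw [sum_sub_distrib, sum_comm (s := univ)]
  calc _ ≤ _ := abs_sub _ _
    _ ≤ B * (1 + ∑ t ∈ Icc 1 T, D t) := by linarith

lemma average_sum_sum_mul_sub_eq {ι : Type*} [Fintype ι] {p e : ℕ → ι → ℝ} {T : ℕ}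
    (hT : T ≠ 0) (hp1 : ∀ t ∈ Icc 1 T, ∑ i, p t i = 1) (α : ℝ) :
    1 / (T : ℝ) * ∑ t ∈ Icc 1 T, ∑ i, p t i * e t i - α
      = 1 / (T : ℝ) * ∑ t ∈ Icc 1 T, ∑ i, p t i * (e t i - α) := by
  have hsum : ∑ t ∈ Icc 1 T, ∑ i, p t i * (e t i - α)
      = ∑ t ∈ Icc 1 T, ∑ i, p t i * e t i - T * α := by
    calc _ = ∑ t ∈ Icc 1 T, (∑ i, p t i * e t i - α) := sum_congr rfl fun t ht => by
          simp only [mul_sub, sum_sub_distrib, ← sum_mul, hp1 t ht, one_mul]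
      _ = _ := by simp [sum_sub_distrib]
  rw [hsum]
  field_simp

lemma faci_coverage_bound_of_abs_le {T : ℕ} {X γmin γmax : ℝ} {η σ : ℕ → ℝ}
    (hγmin : 0 < γmin) (hγmax : 0 ≤ γmax) (hη : ∀ t ∈ Icc 1 T, 0 ≤ η t)
    (hX : |X| ≤ (1 + γmax) / γmin * (1 + ∑ t ∈ Icc 1 T,
      (η t * (1 + 2 * γmax) * exp (η t * (1 + 2 * γmax)) + 2 * σ t))) :
    |1 / (T : ℝ) * X|
      ≤ (1 + 2 * γmax) / ((T : ℝ) * γmin)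
        + ((1 + 2 * γmax) ^ 2 / γmin) * (1 / (T : ℝ) * ∑ t ∈ Icc 1 T,
          η t * exp (η t * (1 + 2 * γmax)))
        + 2 * ((1 + γmax) / γmin) * (1 / (T : ℝ) * ∑ t ∈ Icc 1 T, σ t) := by
  rcases T.eq_zero_or_pos with rfl | hT
  · simp
  set L := 1 + 2 * γmax
  have hA : 0 ≤ ∑ t ∈ Icc 1 T, η t * exp (η t * L) :=
    sum_nonneg fun t ht => mul_nonneg (hη t ht) (exp_pos _).le
  have hsplit : ∑ t ∈ Icc 1 T, (η t * L * exp (η t * L) + 2 * σ t)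
      = L * ∑ t ∈ Icc 1 T, η t * exp (η t * L) + 2 * ∑ t ∈ Icc 1 T, σ t := by
    rw [sum_add_distrib, mul_sum, mul_sum]
    exact congrArg₂ _ (sum_congr rfl fun t _ => by ring) rfl
  have hB : (1 + γmax) / γmin ≤ L / γmin := by gcongr; linarith
  have hBL : (1 + γmax) / γmin * L ≤ L ^ 2 / γmin := by
    rw [sq, div_mul_eq_mul_div]
    gcongr
    linarith
  rw [hsplit] at hX
  have hX' : |X| ≤ L / γmin + L ^ 2 / γmin * ∑ t ∈ Icc 1 T, η t * exp (η t * L)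
      + 2 * ((1 + γmax) / γmin) * ∑ t ∈ Icc 1 T, σ t := by
    nlinarith [mul_le_mul_of_nonneg_right hBL hA]
  rw [abs_mul, abs_of_pos (by positivity)]
  calc _ ≤ 1 / (T : ℝ) * _ := mul_le_mul_of_nonneg_left hX' (by positivity)
    _ = _ := by field_simp

/-- Long-term coverage bound for FACI with time-varying parameters (Theorem 6 of the
paper): the deviation of the average expected miscoverage from `α` is bounded in terms
of the averages of `η_t·exp(η_t(1+2γ_max))` and of `σ_t`. -/
theorem faci_long_term_coverage
    (α : ℝ) (hα : α ∈ Set.Icc (0 : ℝ) 1)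
    (k T : ℕ) (hk : 0 < k) (hT : 1 ≤ T)
    (γ : Fin k → ℝ) (hγ : ∀ i, 0 < γ i)
    (γmin γmax : ℝ)
    (hγmin : γmin = Finset.univ.inf' ⟨⟨0, hk⟩, Finset.mem_univ _⟩ γ)
    (hγmax : γmax = Finset.univ.sup' ⟨⟨0, hk⟩, Finset.mem_univ _⟩ γ)
    (β : ℕ → ℝ) (hβ : ∀ t, 1 ≤ t → t ≤ T → β t ∈ Set.Icc (0 : ℝ) 1)
    (η σ : ℕ → ℝ) (hη : ∀ t, 1 ≤ t → 0 < η t)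
    (hσ : ∀ t, 1 ≤ t → σ t ∈ Set.Icc (0 : ℝ) 1)
    (a : ℕ → Fin k → ℝ) (ha1 : ∀ i, a 1 i ∈ Set.Icc (0 : ℝ) 1)
    (err : ℕ → Fin k → ℝ)
    (herr : ∀ t i, err t i = if β t < a t i then 1 else 0)
    (harec : ∀ t, 1 ≤ t → ∀ i, a (t + 1) i = a t i + γ i * (α - err t i))
    (w : ℕ → Fin k → ℝ) (hw1 : ∀ i, w 1 i = 1)
    (hwrec : ∀ t, 1 ≤ t → ∀ i,
      w (t + 1) i = (1 - σ t) * w t i * Real.exp (-(η t) * pinball α (β t) (a t i))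
        + σ t / k * ∑ j, w t j * Real.exp (-(η t) * pinball α (β t) (a t j)))
    (p : ℕ → Fin k → ℝ) (hp : ∀ t i, p t i = w t i / ∑ j, w t j) :
    |(1 / (T : ℝ)) * ∑ t ∈ Finset.Icc 1 T, ∑ i, p t i * err t i - α|
      ≤ (1 + 2 * γmax) / ((T : ℝ) * γmin)
        + ((1 + 2 * γmax) ^ 2 / γmin)
          * ((1 / (T : ℝ)) * ∑ t ∈ Finset.Icc 1 T,
              η t * Real.exp (η t * (1 + 2 * γmax)))
        + 2 * ((1 + γmax) / γmin)
          * ((1 / (T : ℝ)) * ∑ t ∈ Finset.Icc 1 T, σ t) := by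
  have : Nonempty (Fin k) := ⟨⟨0, hk⟩⟩
  have hγmin_le : ∀ i, γmin ≤ γ i := fun i => hγmin ▸ inf'_le _ (mem_univ i)
  have hγmax_ge : ∀ i, γ i ≤ γmax := fun i => hγmax ▸ le_sup' _ (mem_univ i)
  have hγmin_pos : 0 < γmin := hγmin ▸ (lt_inf'_iff _).mpr fun i _ => hγ i
  have hγmax_nonneg : 0 ≤ γmax := (hγ ⟨0, hk⟩).le.trans (hγmax_ge _)
  have hstep : ∀ t, 1 ≤ t →
      w (t + 1) = faciStep (η t) (σ t) (fun i => pinball α (β t) (a t i)) (w t) :=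
    fun t ht => funext fun i => by rw [hwrec t ht i, faciStep, Fintype.card_fin]
  have hwpos : ∀ t, 1 ≤ t → ∀ i, 0 < w t i := by
    intro t ht
    induction t, ht using Nat.le_induction with
    | base => simp [hw1]
    | succ t ht ih => exact hstep t ht ▸ faciStep_pos ih (hσ t ht)
  have hp1 : ∀ t, 1 ≤ t → ∑ i, p t i = 1 := fun t ht => by
    simp only [hp]
    rw [← sum_div, div_self (sum_pos (fun j _ => hwpos t ht j) univ_nonempty).ne']
  have hpT : ∀ i, 0 < p T i := fun i => by
    rw [hp]
    exact div_pos (hwpos T hT i) (sum_pos (fun j _ => hwpos T hT j) univ_nonempty)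
  have hpartial : ∀ t ≤ T, ∀ i, |∑ s ∈ Icc 1 t, (err s i - α)| ≤ (1 + γmax) / γmin :=
    fun t ht i => (aci_abs_sum_err_sub_le hα (hγ i) hβ (ha1 i) (fun t => herr t i)
      (fun t ht => harec t ht i) ht).trans
        (div_le_div₀ (by linarith [hγ i]) (by linarith [hγmax_ge i]) hγmin_pos (hγmin_le i))
  have hdrift : ∀ t ∈ Icc 1 T, ∑ i, |p (t + 1) i - p t i|
      ≤ η t * (1 + 2 * γmax) * exp (η t * (1 + 2 * γmax)) + 2 * σ t := fun t ht => by
    have ht1 := (mem_Icc.mp ht).1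
    simp only [hp, hstep t ht1]
    refine sum_abs_faciStep_div_sum_sub_le (hwpos t ht1) (hη t ht1).le (fun i => ?_) (hσ t ht1)
    exact Set.Icc_subset_Icc_right (by linarith [hγmax_ge i]) <| aci_pinball_mem_Icc hα
      (hγ i).le hβ (ha1 i) (fun t => herr t i) (fun t ht => harec t ht i) ht
  rw [average_sum_sum_mul_sub_eq (by omega) fun t ht => hp1 t (mem_Icc.mp ht).1]
  exact faci_coverage_bound_of_abs_le hγmin_pos hγmax_nonneg
    (fun t ht => (hη t (mem_Icc.mp ht).1).le)
    (abs_sum_sum_mul_le_of_abs_partial_sum_le (fun i => (hpT i).le) (hp1 T hT) hpartial hdrift)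
end
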